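/- Under the stated setup with 0 < δ₀ < ψ̃, for every q ∈ [0, q₀] one has ∫ ψ dμ_q < ψ̃ + δ₀/2. -/

import Mathlib

/-!
Twisting the normalised operator by `qψ ≥ 0` only inflates iterates: since
`L_{φ+qψ}ⁿ u = L_φⁿ (e^{q Sₙψ} u)` with `Sₙψ` the Birkhoff sum,
`L_φⁿ u ≤ L_{φ+qψ}ⁿ u ≤ e^{nq|ψ|_∞} L_φⁿ u` for `u ≥ 0`. Integrating `L_{φ+qψ} 1 ≥ L_φ 1 = 1`
against `ν_q` gives `λ_q ≥ 1`. The spectral gap applied to `1` then bounds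
`h_q ≤ e^{nq|ψ|_∞} + Dρⁿ`, and `λ_qⁿ ν_q(ψ) = ν_q(L_{φ+qψ}ⁿ ψ)` together with
`L_φⁿ ψ ≤ ψ̃ + C₀Dρⁿ` bounds `ν_q(ψ) ≤ e^{nq|ψ|_∞}(ψ̃ + C₀Dρⁿ)`. As `μ_q(ψ) = ν_q(h_q ψ)`, it
remains to note that `n = n₀` makes `C₀Dρⁿ ≤ δ₀/16` and `q ≤ q₀` makes
`e^{nq|ψ|_∞} ≤ 1 + δ₀/(100C₀)`.
-/


open MeasureTheory Real ENNReal

namespace SFT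

/-- The one-sided subshift of finite type determined by the 0-1 matrix `A`. -/
def Space {s₀ : ℕ} (A : Matrix (Fin s₀) (Fin s₀) ℕ) : Type :=
  {ξ : ℕ → Fin s₀ // ∀ i, A (ξ i) (ξ (i + 1)) = 1}

variable {s₀ : ℕ} {A : Matrix (Fin s₀) (Fin s₀) ℕ}

instance : TopologicalSpace (Space A) :=
  inferInstanceAs (TopologicalSpace {ξ : ℕ → Fin s₀ // ∀ i, A (ξ i) (ξ (i + 1)) = 1})

noncomputable instance : MeasurableSpace (Space A) := borel _
instance : BorelSpace (Space A) := ⟨rfl⟩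

/-- The shift map σ. -/
def shift (x : Space A) : Space A := ⟨fun i => x.1 (i + 1), fun i => x.2 (i + 1)⟩

/-- `var_k g` as an extended real. -/
noncomputable def evar (g : Space A → ℝ) (k : ℕ) : ℝ≥0∞ :=
  ⨆ (ξ : Space A) (η : Space A) (_ : ∀ i ≤ k, ξ.1 i = η.1 i), ENNReal.ofReal |g ξ - g η|

/-- `|g|_θ` as an extended real. -/
noncomputable def eHolder (θ : ℝ) (g : Space A → ℝ) : ℝ≥0∞ :=
  ⨆ k : ℕ, evar g k / ENNReal.ofReal (θ ^ k)

/-- `|g|_∞` as an extended real. -/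
noncomputable def eSup (g : Space A → ℝ) : ℝ≥0∞ :=
  ⨆ ξ : Space A, ENNReal.ofReal |g ξ|

/-- `|g|_θ`. -/
noncomputable def holderNorm (θ : ℝ) (g : Space A → ℝ) : ℝ := (eHolder θ g).toReal

/-- `|g|_∞`. -/
noncomputable def supNorm (g : Space A → ℝ) : ℝ := (eSup g).toReal

/-- `‖g‖_θ = |g|_θ + |g|_∞`. -/
noncomputable def fNorm (θ : ℝ) (g : Space A → ℝ) : ℝ := holderNorm θ g + supNorm g

/-- Membership in `F_θ(Σ_A⁺)`: finiteness of `‖g‖_θ`. -/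
def MemF (θ : ℝ) (g : Space A → ℝ) : Prop := eHolder θ g + eSup g < ⊤


instance shiftFiberFinite (x : Space A) : Finite {y : Space A // shift y = x} := by
  apply Finite.of_injective (fun y : {y : Space A // shift y = x} => y.1.1 0)
  rintro ⟨y, hy⟩ ⟨z, hz⟩ h
  apply Subtype.ext
  apply Subtype.ext
  funext n
  cases n with
  | zero => exact h
  | succ i =>
    have h1 : y.1 (i + 1) = x.1 i := congrFun (congrArg Subtype.val hy) i
    have h2 : z.1 (i + 1) = x.1 i := congrFun (congrArg Subtype.val hz) i
    rw [h1, h2]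

/-- The Ruelle transfer operator `(L_f g)(x) = Σ_{σ y = x} e^{f(y)} g(y)`. -/
noncomputable def transfer (f g : Space A → ℝ) (x : Space A) : ℝ :=
  ∑' y : {y : Space A // shift y = x}, Real.exp (f y.1) * g y.1

/-- Two functions are cohomologous if they differ by a continuous coboundary. -/
def Cohomologous (u v : Space A → ℝ) : Prop :=
  ∃ w : Space A → ℝ, Continuous w ∧ ∀ x, u x = v x + w (shift x) - w x

/-- ψ is cohomologous to a constant. -/
def CohomToConst (ψ : Space A → ℝ) : Prop := ∃ c : ℝ, Cohomologous ψ fun _ => c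

/-- A finite measurable partition of the space. -/
def IsPartition {k : ℕ} (P : Fin k → Set (Space A)) : Prop :=
  (∀ i, MeasurableSet (P i)) ∧ (Pairwise fun i j => Disjoint (P i) (P j)) ∧
    (⋃ i, P i) = Set.univ

/-- Entropy of the n-th join `⋁_{j<n} σ^{-j} P` of a partition. -/
noncomputable def joinEntropy (m : Measure (Space A)) {k : ℕ} (P : Fin k → Set (Space A))
    (n : ℕ) : ℝ :=
  ∑ a : Fin n → Fin k,
    Real.negMulLog (m (⋂ j : Fin n, shift^[(j : ℕ)] ⁻¹' P (a j))).toReal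

/-- Measure-theoretic (Kolmogorov–Sinai) entropy of `m` with respect to the shift. -/
noncomputable def entropy (m : Measure (Space A)) : ℝ :=
  sSup {h | ∃ k : ℕ, ∃ P : Fin k → Set (Space A), IsPartition P ∧
    h = ⨅ n : ℕ, joinEntropy m P (n + 1) / (n + 1)}

/-- σ-invariance of a measure. -/
def IsInvariant (m : Measure (Space A)) : Prop := m.map shift = m

/-- Topological pressure via the variational principle. -/
noncomputable def pressure (g : Space A → ℝ) : ℝ :=
  sSup {r | ∃ m : Measure (Space A), IsProbabilityMeasure m ∧ IsInvariant m ∧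
    r = entropy m + ∫ x, g x ∂m}

/-- `m` is an equilibrium state of `g`. -/
def IsEqm (g : Space A → ℝ) (m : Measure (Space A)) : Prop :=
  IsProbabilityMeasure m ∧ IsInvariant m ∧ entropy m + ∫ x, g x ∂m = pressure g

/-- The Ruelle–Perron–Frobenius data of `f`: an eigenvalue `lam > 0`, a probability
eigenmeasure `ν` of the dual operator, and a positive normalised eigenfunction `h ∈ F_θ`. -/
def IsRPF (θ : ℝ) (f : Space A → ℝ) (lam : ℝ) (ν : Measure (Space A))
    (h : Space A → ℝ) : Prop :=
  0 < lam ∧ IsProbabilityMeasure ν ∧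
    (∀ g : Space A → ℝ, Continuous g → ∫ x, transfer f g x ∂ν = lam * ∫ x, g x ∂ν) ∧
    MemF θ h ∧ (∀ x, 0 < h x) ∧ (∀ x, transfer f h x = lam * h x) ∧ (∫ x, h x ∂ν) = 1


open Topology

section Norms

variable {θ : ℝ} {g : Space A → ℝ}

lemma abs_le_supNorm (hg : eSup g ≠ ⊤) (x : Space A) : |g x| ≤ supNorm g := by
  have hx : ENNReal.ofReal |g x| ≤ eSup g := le_iSup (fun ξ => ENNReal.ofReal |g ξ|) x
  simpa [supNorm, ENNReal.toReal_ofReal (abs_nonneg _)] using ENNReal.toReal_mono hg hx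

lemma eSup_ne_top_of_abs_le {c : ℝ} (hc : ∀ x, |g x| ≤ c) : eSup g ≠ ⊤ :=
  ((iSup_le fun x => ENNReal.ofReal_le_ofReal (hc x)).trans_lt ENNReal.ofReal_lt_top).ne

lemma abs_le_fNorm (hg : eSup g ≠ ⊤) (x : Space A) : |g x| ≤ fNorm θ g :=
  (abs_le_supNorm hg x).trans (le_add_of_nonneg_left ENNReal.toReal_nonneg)

lemma MemF.eSup_ne_top (hg : MemF θ g) : eSup g ≠ ⊤ :=
  ne_top_of_le_ne_top hg.ne le_add_self

lemma MemF.eHolder_ne_top (hg : MemF θ g) : eHolder θ g ≠ ⊤ :=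
  ne_top_of_le_ne_top hg.ne le_self_add

lemma eHolder_const (c : ℝ) : eHolder θ (fun _ : Space A => c) = 0 := by
  simp [eHolder, evar]

lemma eSup_const_le (c : ℝ) : eSup (fun _ : Space A => c) ≤ ENNReal.ofReal |c| :=
  iSup_le fun _ => le_rfl

lemma memF_const (c : ℝ) : MemF θ (fun _ : Space A => c) := by
  rw [MemF, eHolder_const, zero_add]
  exact (eSup_const_le c).trans_lt ENNReal.ofReal_lt_top

lemma fNorm_const_le (c : ℝ) : fNorm θ (fun _ : Space A => c) ≤ |c| := by
  rw [fNorm, holderNorm, eHolder_const, ENNReal.toReal_zero, zero_add]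
  exact ENNReal.toReal_le_of_le_ofReal (abs_nonneg c) (eSup_const_le c)

lemma abs_sub_le_holderNorm_mul (hθ : 0 < θ) (hg : eHolder θ g ≠ ⊤) {k : ℕ} {ξ η : Space A}
    (hk : ∀ i ≤ k, ξ.1 i = η.1 i) : |g ξ - g η| ≤ holderNorm θ g * θ ^ k := by
  have hθk : 0 < θ ^ k := pow_pos hθ k
  have hvar : ENNReal.ofReal |g ξ - g η| ≤ evar g k :=
    le_iSup_of_le ξ (le_iSup_of_le η (le_iSup_of_le hk le_rfl))
  have hholder : evar g k ≤ eHolder θ g * ENNReal.ofReal (θ ^ k) :=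
    (ENNReal.div_le_iff_le_mul (Or.inl (by simpa using hθk)) (Or.inl ENNReal.ofReal_ne_top)).mp
      (le_iSup (fun k => evar g k / ENNReal.ofReal (θ ^ k)) k)
  rw [holderNorm, ← ENNReal.ofReal_le_ofReal_iff (by positivity),
    ENNReal.ofReal_mul ENNReal.toReal_nonneg, ENNReal.ofReal_toReal hg]
  exact hvar.trans hholder

lemma MemF.continuous (hθ0 : 0 < θ) (hθ1 : θ < 1) (hg : MemF θ g) : Continuous g := by
  refine continuous_iff_continuousAt.mpr fun ξ => Metric.tendsto_nhds.mpr fun ε hε => ?_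
  obtain ⟨k, hk⟩ : ∃ k : ℕ, holderNorm θ g * θ ^ k < ε :=
    (((tendsto_pow_atTop_nhds_zero_of_lt_one hθ0.le hθ1).const_mul _).eventually
      (gt_mem_nhds (by simpa using hε))).exists
  have hcylinder : ∀ᶠ η in 𝓝 ξ, ∀ i ∈ Set.Iic k, η.1 i = ξ.1 i := by
    refine (Filter.eventually_all_finite (Set.finite_Iic k)).mpr fun i _ => ?_
    have hcoord : Continuous fun η : Space A => η.1 i :=
      (continuous_apply i).comp continuous_subtype_val
    exact hcoord.continuousAt.eventually_mem ((isOpen_discrete {ξ.1 i}).mem_nhds rfl)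
  filter_upwards [hcylinder] with η hη
  rw [Real.dist_eq]
  exact (abs_sub_le_holderNorm_mul hθ0 hg.eHolder_ne_top hη).trans_lt hk

end Norms

instance : CompactSpace (Space A) := by
  have hclosed : IsClosed {ξ : ℕ → Fin s₀ | ∀ i, A (ξ i) (ξ (i + 1)) = 1} := by
    simp only [Set.ofPred_forall]
    refine isClosed_iInter fun i => isClosed_eq ?_ continuous_const
    have hpair : Continuous fun ξ : ℕ → Fin s₀ => (ξ i, ξ (i + 1)) :=
      (continuous_apply i).prodMk (continuous_apply (i + 1))
    exact (continuous_of_discreteTopology (f := fun p : Fin s₀ × Fin s₀ => A p.1 p.2)).comp hpair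
  exact isCompact_iff_compactSpace.mp hclosed.isCompact

lemma _root_.Continuous.integrable_of_compactSpace {X E : Type*} [TopologicalSpace X]
    [CompactSpace X] [MeasurableSpace X] [OpensMeasurableSpace X] [NormedAddCommGroup E]
    {g : X → E} (hg : Continuous g) (m : Measure X) [IsFiniteMeasure m] : Integrable g m :=
  hg.integrable_of_hasCompactSupport (HasCompactSupport.of_compactSpace g)

lemma continuous_dite_of_isClopen {X Y : Type*} [TopologicalSpace X] [TopologicalSpace Y]
    {p : X → Prop} [DecidablePred p] (hp : IsClopen {x | p x}) {f : {x // p x} → Y}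
    (hf : Continuous f) {g : X → Y} (hg : Continuous g) :
    Continuous fun x => if h : p x then f ⟨x, h⟩ else g x := by
  refine continuous_iff_continuousAt.mpr fun x => ?_
  by_cases hx : p x
  · have hon : ContinuousOn (fun x => if h : p x then f ⟨x, h⟩ else g x) {x | p x} := by
      rw [continuousOn_iff_continuous_domRestrict]
      exact hf.congr fun z => by rw [Set.domRestrict_apply, dif_pos z.2]
    exact hon.continuousAt (hp.isOpen.mem_nhds hx)
  · have hon : ContinuousOn (fun x => if h : p x then f ⟨x, h⟩ else g x) {x | ¬p x} :=
      hg.continuousOn.congr fun z hz => dif_neg hz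
    exact hon.continuousAt (hp.compl.isOpen.mem_nhds hx)

section Transfer

variable {f u v : Space A → ℝ}

lemma transfer_mono (h : ∀ y, u y ≤ v y) (x : Space A) : transfer f u x ≤ transfer f v x :=
  Summable.tsum_le_tsum (fun y => mul_le_mul_of_nonneg_left (h y.1) (exp_pos _).le)
    Summable.of_finite Summable.of_finite

lemma transfer_nonneg (h : ∀ y, 0 ≤ u y) (x : Space A) : 0 ≤ transfer f u x :=
  tsum_nonneg fun y => mul_nonneg (exp_pos _).le (h y.1)

lemma transfer_const_mul (f u : Space A → ℝ) (c : ℝ) (x : Space A) :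
    transfer f (fun y => c * u y) x = c * transfer f u x := by
  rw [transfer, transfer, ← tsum_mul_left]
  exact tsum_congr fun y => by ring

lemma transfer_comp_shift_mul (f u v : Space A → ℝ) (x : Space A) :
    transfer f (fun y => v (shift y) * u y) x = v x * transfer f u x := by
  rw [transfer, transfer, ← tsum_mul_left]
  refine tsum_congr fun y => ?_
  rw [y.2]
  ring

lemma transfer_add (f w g : Space A → ℝ) :
    transfer (fun y => f y + w y) g = transfer f (fun y => exp (w y) * g y) :=
  funext fun _ => tsum_congr fun y => by rw [exp_add, mul_assoc]

lemma transfer_const (hL1 : transfer f (fun _ => 1) = fun _ => 1) (c : ℝ) :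
    transfer f (fun _ => c) = fun _ => c :=
  funext fun x => by simpa [hL1] using transfer_const_mul f (fun _ => 1) c x

lemma iterate_transfer_mono (n : ℕ) (h : ∀ y, u y ≤ v y) (x : Space A) :
    (transfer f)^[n] u x ≤ (transfer f)^[n] v x := by
  induction n generalizing u v with
  | zero => exact h x
  | succ n ih => exact ih (transfer_mono h)

lemma iterate_transfer_nonneg (n : ℕ) (h : ∀ y, 0 ≤ u y) (x : Space A) :
    0 ≤ (transfer f)^[n] u x := by
  induction n generalizing u with
  | zero => exact h x
  | succ n ih => exact ih (transfer_nonneg h)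

lemma iterate_transfer_const_mul (f u : Space A → ℝ) (c : ℝ) (n : ℕ) :
    (transfer f)^[n] (fun y => c * u y) = fun x => c * (transfer f)^[n] u x := by
  induction n generalizing u with
  | zero => rfl
  | succ n ih =>
    rw [Function.iterate_succ_apply, Function.iterate_succ_apply,
      funext (transfer_const_mul f u c), ih]

lemma iterate_transfer_mem_Icc (hL1 : transfer f (fun _ => 1) = fun _ => 1) (n : ℕ) {a b : ℝ}
    (h : ∀ y, u y ∈ Set.Icc a b) (x : Space A) : (transfer f)^[n] u x ∈ Set.Icc a b := by
  have hconst (c : ℝ) : (transfer f)^[n] (fun _ => c) x = c :=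
    congrFun (Function.iterate_fixed (transfer_const hL1 c) n) x
  exact ⟨hconst a ▸ iterate_transfer_mono n (fun y => (h y).1) x,
    hconst b ▸ iterate_transfer_mono n (fun y => (h y).2) x⟩

def cons (i : Fin s₀) (x : Space A) (h : A i (x.1 0) = 1) : Space A :=
  ⟨fun n => Nat.casesOn n i x.1, fun n => by
    cases n with
    | zero => exact h
    | succ k => exact x.2 k⟩

def fiberEquiv (x : Space A) : {y : Space A // shift y = x} ≃ {i : Fin s₀ // A i (x.1 0) = 1} where
  toFun y := ⟨y.1.1 0, (congrArg (fun z : Space A => A (y.1.1 0) (z.1 0) = 1) y.2).mp (y.1.2 0)⟩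
  invFun i := ⟨cons i.1 x i.2, rfl⟩
  left_inv y := by
    obtain ⟨y, rfl⟩ := y
    refine Subtype.ext (Subtype.ext (funext fun n => ?_))
    cases n <;> rfl
  right_inv _ := rfl

lemma transfer_eq_sum (f g : Space A → ℝ) (x : Space A) :
    transfer f g x = ∑ i : Fin s₀,
      if h : A i (x.1 0) = 1 then exp (f (cons i x h)) * g (cons i x h) else 0 := by
  set F : Fin s₀ → ℝ := fun i =>
    if h : A i (x.1 0) = 1 then exp (f (cons i x h)) * g (cons i x h) else 0
  rw [transfer, ← (fiberEquiv x).symm.tsum_eq,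
    ← tsum_fintype (L := SummationFilter.unconditional _) F,
    ← tsum_subtype_eq_of_support_subset (s := {i | A i (x.1 0) = 1})]
  · exact tsum_congr fun i => by simp only [F, dif_pos i.2]; rfl
  · intro i hi
    by_contra h
    exact hi (dif_neg h)

lemma continuous_transfer {g : Space A → ℝ} (hf : Continuous f) (hg : Continuous g) :
    Continuous (transfer f g) := by
  rw [funext (transfer_eq_sum f g)]
  refine continuous_finsetSum _ fun i _ => ?_
  have hclopen : IsClopen {x : Space A | A i (x.1 0) = 1} :=
    (isClopen_discrete {j | A i j = 1}).preimage ((continuous_apply 0).comp continuous_subtype_val)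
  have hcons : Continuous fun z : {x : Space A // A i (x.1 0) = 1} => cons i z.1 z.2 := by
    refine Continuous.subtype_mk (continuous_pi fun n => ?_) _
    cases n with
    | zero => exact continuous_const
    | succ k => exact (continuous_apply k).comp (continuous_subtype_val.comp continuous_subtype_val)
  exact continuous_dite_of_isClopen (p := fun x : Space A => A i (x.1 0) = 1) hclopen
    (((hf.comp hcons).rexp).mul (hg.comp hcons)) continuous_const

lemma continuous_iterate_transfer {g : Space A → ℝ} (hf : Continuous f) (hg : Continuous g)
    (n : ℕ) : Continuous ((transfer f)^[n] g) := by
  induction n with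
  | zero => exact hg
  | succ n ih => exact Function.iterate_succ_apply' (transfer f) n g ▸ continuous_transfer hf ih

end Transfer

section Twist

lemma iterate_transfer_add (φ w g : Space A → ℝ) (n : ℕ) :
    (transfer (fun y => φ y + w y))^[n] g
      = (transfer φ)^[n] (fun y => exp (birkhoffSum shift w n y) * g y) := by
  induction n generalizing g with
  | zero => simp
  | succ n ih =>
    rw [Function.iterate_succ_apply, ih, Function.iterate_succ_apply]
    congr 1
    funext x
    rw [transfer_add, ← transfer_comp_shift_mul φ _ (fun z => exp (birkhoffSum shift w n z))]
    congr 1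
    funext y
    rw [birkhoffSum_succ', exp_add]
    ring

variable {φ w u : Space A → ℝ}

lemma iterate_transfer_le_iterate_transfer_add (hw : ∀ y, 0 ≤ w y) (hu : ∀ y, 0 ≤ u y)
    (n : ℕ) (x : Space A) :
    (transfer φ)^[n] u x ≤ (transfer (fun y => φ y + w y))^[n] u x := by
  rw [iterate_transfer_add]
  refine iterate_transfer_mono n (fun y => le_mul_of_one_le_left (hu y) (one_le_exp ?_)) x
  exact Finset.sum_nonneg fun k _ => hw _

lemma iterate_transfer_add_le {c : ℝ} (hw : ∀ y, w y ≤ c) (hu : ∀ y, 0 ≤ u y)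
    (n : ℕ) (x : Space A) :
    (transfer (fun y => φ y + w y))^[n] u x ≤ exp (n * c) * (transfer φ)^[n] u x := by
  rw [iterate_transfer_add, ← congrFun (iterate_transfer_const_mul φ u _ n) x]
  refine iterate_transfer_mono n
    (fun y => mul_le_mul_of_nonneg_right (exp_le_exp.mpr ?_) (hu y)) x
  simpa [birkhoffSum] using
    Finset.sum_le_card_nsmul (Finset.range n) (fun k => w (shift^[k] y)) c fun k _ => hw _

end Twist

lemma integral_withDensity_ofReal {X : Type*} [MeasurableSpace X] {μ : Measure X} {h : X → ℝ}
    (hh : Measurable h) (h0 : ∀ x, 0 ≤ h x) (g : X → ℝ) :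
    ∫ x, g x ∂(μ.withDensity fun x => ENNReal.ofReal (h x)) = ∫ x, h x * g x ∂μ := by
  rw [integral_withDensity_eq_integral_toReal_smul (f := fun x => ENNReal.ofReal (h x))
    (ENNReal.measurable_ofReal.comp hh) (ae_of_all _ fun _ => ENNReal.ofReal_lt_top)]
  simp [ENNReal.toReal_ofReal (h0 _)]

lemma le_add_of_supNorm_sub_le {g : Space A → ℝ} {c a K : ℝ} (hg : ∀ x, |g x| ≤ c)
    (h : supNorm (fun x => g x - a) ≤ K) (x : Space A) : g x ≤ a + K := by
  have hbdd : eSup (fun x => g x - a) ≠ ⊤ :=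
    eSup_ne_top_of_abs_le fun x => (abs_sub _ _).trans (add_le_add_left (hg x) _)
  linarith [le_abs_self (g x - a), abs_le_supNorm hbdd x]

def HasSpectralGap (θ : ℝ) (f : Space A → ℝ) (lam : ℝ) (ν : Measure (Space A))
    (h : Space A → ℝ) (n : ℕ) (K : ℝ) : Prop :=
  ∀ g, MemF θ g →
    fNorm θ (fun x => (transfer f)^[n] g x / lam ^ n - h x * ∫ y, g y ∂ν) ≤ K * fNorm θ g

section RPF

variable {θ lam : ℝ} {f h : Space A → ℝ} {ν : Measure (Space A)}

lemma IsRPF.integral_iterate_transfer (hR : IsRPF θ f lam ν h) (hf : Continuous f)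
    {g : Space A → ℝ} (hg : Continuous g) (n : ℕ) :
    ∫ x, (transfer f)^[n] g x ∂ν = lam ^ n * ∫ x, g x ∂ν := by
  obtain ⟨-, -, hdual, -⟩ := hR
  induction n with
  | zero => simp
  | succ n ih =>
    rw [Function.iterate_succ_apply', hdual _ (continuous_iterate_transfer hf hg n), ih, pow_succ]
    ring

lemma IsRPF.le_eigenvalue (hR : IsRPF θ f lam ν h) (hf : Continuous f) {c : ℝ}
    (hc : ∀ x, c ≤ transfer f (fun _ => 1) x) : c ≤ lam := by
  obtain ⟨-, hν, hdual, -⟩ := hR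
  have hint := hdual (fun _ => 1) continuous_const
  simp only [integral_const, probReal_univ, smul_eq_mul, mul_one] at hint
  calc c = ∫ _, c ∂ν := by simp
    _ ≤ ∫ x, transfer f (fun _ => 1) x ∂ν :=
      integral_mono (integrable_const c)
        ((continuous_transfer hf continuous_const).integrable_of_compactSpace ν) hc
    _ = lam := hint

lemma IsRPF.le_of_hasSpectralGap (hR : IsRPF θ f lam ν h) (hlam : 1 ≤ lam) {n : ℕ} {K B : ℝ}
    (hK : 0 ≤ K) (hgap : HasSpectralGap θ f lam ν h n K)
    (hB : ∀ x, (transfer f)^[n] (fun _ => 1) x ≤ B) (x : Space A) : h x ≤ B + K := by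
  obtain ⟨-, hν, -, hh, -⟩ := hR
  have hgap1 := hgap _ (memF_const 1)
  simp only [integral_const, probReal_univ, smul_eq_mul, mul_one] at hgap1
  set L := (transfer f)^[n] (fun _ => (1 : ℝ))
  have hL (z : Space A) : 0 ≤ L z / lam ^ n ∧ L z / lam ^ n ≤ B :=
    have hLz : 0 ≤ L z := iterate_transfer_nonneg n (fun _ => zero_le_one) z
    ⟨by positivity, (div_le_self hLz (one_le_pow₀ hlam)).trans (hB z)⟩
  have hbdd : eSup (fun z => L z / lam ^ n - h z) ≠ ⊤ :=
    eSup_ne_top_of_abs_le fun z => (abs_sub _ _).trans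
      (add_le_add (abs_le.mpr ⟨by linarith [hL z], (hL z).2⟩) (abs_le_supNorm hh.eSup_ne_top z))
  have hone : fNorm θ (fun _ : Space A => (1 : ℝ)) ≤ 1 := (fNorm_const_le 1).trans_eq abs_one
  linarith [(abs_le.mp ((abs_le_fNorm hbdd x).trans hgap1)).1, mul_le_of_le_one_right hK hone,
    (hL x).2]

lemma IsRPF.integral_le (hR : IsRPF θ f lam ν h) (hf : Continuous f) (hlam : 1 ≤ lam)
    {g : Space A → ℝ} (hg : Continuous g) (hg0 : ∀ x, 0 ≤ g x) {n : ℕ} {M : ℝ}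
    (hM : ∀ x, (transfer f)^[n] g x ≤ M) : ∫ x, g x ∂ν ≤ M := by
  have hν := hR.2.1
  calc ∫ x, g x ∂ν ≤ lam ^ n * ∫ x, g x ∂ν :=
        le_mul_of_one_le_left (integral_nonneg hg0) (one_le_pow₀ hlam)
    _ = ∫ x, (transfer f)^[n] g x ∂ν := (hR.integral_iterate_transfer hf hg n).symm
    _ ≤ ∫ _, M ∂ν :=
        integral_mono ((continuous_iterate_transfer hf hg n).integrable_of_compactSpace ν)
          (integrable_const M) hM
    _ = M := by simp

lemma IsRPF.integral_withDensity_le {q : ℝ} {φ ψ : Space A → ℝ} {n : ℕ} {K K' ψt : ℝ}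
    (hθ0 : 0 < θ) (hθ1 : θ < 1) (hR : IsRPF θ (fun x => φ x + q * ψ x) lam ν h)
    (hφ : MemF θ φ) (hψ : MemF θ ψ) (hL1 : transfer φ (fun _ => 1) = fun _ => 1)
    (hq : 0 ≤ q) (hψ0 : ∀ x, 0 ≤ ψ x) (hK : 0 ≤ K)
    (hgap : HasSpectralGap θ (fun x => φ x + q * ψ x) lam ν h n K)
    (hLψ : supNorm (fun x => (transfer φ)^[n] ψ x - ψt) ≤ K') :
    ∫ x, ψ x ∂(ν.withDensity fun x => ENNReal.ofReal (h x))
      ≤ (exp (n * (q * supNorm ψ)) + K) * (exp (n * (q * supNorm ψ)) * (ψt + K')) := by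
  set E := exp (n * (q * supNorm ψ))
  have hψc : Continuous ψ := hψ.continuous hθ0 hθ1
  have hf : Continuous fun x => φ x + q * ψ x :=
    (hφ.continuous hθ0 hθ1).add (continuous_const.mul hψc)
  have hψS (x : Space A) : ψ x ∈ Set.Icc 0 (supNorm ψ) :=
    ⟨hψ0 x, (le_abs_self _).trans (abs_le_supNorm hψ.eSup_ne_top x)⟩
  have hw0 (x : Space A) : 0 ≤ q * ψ x := mul_nonneg hq (hψ0 x)
  have hwS (x : Space A) : q * ψ x ≤ q * supNorm ψ := mul_le_mul_of_nonneg_left (hψS x).2 hq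
  have hlam : 1 ≤ lam := hR.le_eigenvalue hf fun x => by
    simpa [hL1] using
      iterate_transfer_le_iterate_transfer_add (φ := φ) hw0 (fun _ => zero_le_one) 1 x
  have hh : ∀ x, h x ≤ E + K := hR.le_of_hasSpectralGap hlam hK hgap fun x => by
    simpa [Function.iterate_fixed hL1 n] using
      iterate_transfer_add_le (φ := φ) hwS (fun _ => zero_le_one) n x
  have hLψ' (x : Space A) : (transfer φ)^[n] ψ x ≤ ψt + K' := by
    refine le_add_of_supNorm_sub_le (c := supNorm ψ) (fun y => ?_) hLψ x
    have hy := iterate_transfer_mem_Icc hL1 n hψS y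
    exact abs_le.mpr ⟨by linarith [hy.1, (hψS y).1.trans (hψS y).2], hy.2⟩
  have hνψ : ∫ x, ψ x ∂ν ≤ E * (ψt + K') := hR.integral_le hf hlam hψc hψ0 fun x =>
    (iterate_transfer_add_le (φ := φ) hwS hψ0 n x).trans
      (mul_le_mul_of_nonneg_left (hLψ' x) (exp_pos _).le)
  obtain ⟨-, hν, -, hhF, hpos, -⟩ := hR
  have hhc : Continuous h := hhF.continuous hθ0 hθ1
  rw [integral_withDensity_ofReal hhc.measurable fun x => (hpos x).le]
  calc ∫ x, h x * ψ x ∂ν ≤ ∫ x, (E + K) * ψ x ∂ν :=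
        integral_mono ((hhc.mul hψc).integrable_of_compactSpace ν)
          ((continuous_const.mul hψc).integrable_of_compactSpace ν)
          fun x => mul_le_mul_of_nonneg_right (hh x) (hψ0 x)
    _ = (E + K) * ∫ x, ψ x ∂ν := integral_const_mul _ _
    _ ≤ (E + K) * (E * (ψt + K')) := mul_le_mul_of_nonneg_left hνψ (by positivity)

end RPF

lemma hundred_mul_exp_sub_one_le {C δ q S : ℝ} {n : ℕ} (hC : 0 < C) (hδ : 0 ≤ δ) (hδC : δ ≤ C)
    (hq0 : 0 ≤ q) (hq : q ≤ δ / (100 * C ^ 2 * n)) (hS0 : 0 ≤ S) (hSC : 2 * S ≤ C) :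
    100 * C * (exp (n * (q * S)) - 1) ≤ δ := by
  have hqn : q * n ≤ δ / (100 * C ^ 2) := by
    rcases Nat.eq_zero_or_pos n with rfl | hn
    · simpa using by positivity
    · rw [le_div_iff₀ (by positivity)]
      rw [le_div_iff₀ (by positivity)] at hq
      linarith
  have hx : n * (q * S) ≤ δ / (200 * C) := by
    rw [le_div_iff₀ (by positivity)]
    rw [le_div_iff₀ (by positivity)] at hqn
    nlinarith
  have hx1 : n * (q * S) ≤ 1 := hx.trans ((div_le_one (by positivity)).mpr (by linarith))
  have hexp : exp (n * (q * S)) - 1 ≤ 2 * (n * (q * S)) := by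
    have hx0 : 0 ≤ (n : ℝ) * (q * S) := by positivity
    simpa [abs_of_nonneg hx0] using
      (le_abs_self _).trans (abs_exp_sub_one_le (x := n * (q * S)) (by rwa [abs_of_nonneg hx0]))
  rw [le_div_iff₀ (by positivity)] at hx
  nlinarith

lemma add_mul_mul_add_mul_lt {E R C δ p : ℝ} (hE : 1 ≤ E) (hEδ : 100 * C * (E - 1) ≤ δ)
    (hR : 0 ≤ R) (hRδ : 16 * C * R ≤ δ) (hδ : 0 < δ) (hδp : δ < p) (hpC : 2 * p ≤ C) :
    (E + R) * (E * (p + C * R)) < p + δ / 2 := by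
  nlinarith [mul_nonneg (sub_nonneg.2 hE) hR, mul_nonneg (sub_nonneg.2 hE) (sub_nonneg.2 hE)]

lemma pow_le_of_abs_log_lt {ρ α x : ℝ} {n : ℕ} (hρ0 : 0 ≤ ρ) (hρα : ρ ≤ exp (-α)) (hx : 0 < x)
    (hn : |log x| < α * n) : ρ ^ n ≤ x := by
  calc ρ ^ n ≤ exp (-α) ^ n := pow_le_pow_left₀ hρ0 hρα n
    _ = exp (-(α * n)) := by rw [← exp_nat_mul]; ring_nf
    _ ≤ exp (log x) := exp_le_exp.mpr (by linarith [neg_abs_le (log x)])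
    _ = x := exp_log hx

lemma sixteen_mul_mul_pow_le {C D δ ρ α : ℝ} {n : ℕ} (hC : 0 < C) (hD : 0 < D) (hδ : 0 < δ)
    (hρ0 : 0 ≤ ρ) (hρα : ρ ≤ exp (-α)) (hα : 0 < α)
    (hn : 1 / α * |Real.log (δ / (16 * C * D))| < n) :
    16 * C * (D * ρ ^ n) ≤ δ := by
  have hρn : ρ ^ n ≤ δ / (16 * C * D) :=
    pow_le_of_abs_log_lt hρ0 hρα (by positivity) ((inv_mul_lt_iff₀ hα).mp (by simpa using hn))
  calc 16 * C * (D * ρ ^ n) = 16 * C * D * ρ ^ n := by ring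
    _ ≤ 16 * C * D * (δ / (16 * C * D)) := by gcongr
    _ = δ := mul_div_cancel₀ _ (by positivity)
theorem statement14_general
    {s₀ : ℕ} {A : Matrix (Fin s₀) (Fin s₀) ℕ} {θ : ℝ}
    (hθ0 : 0 < θ) (hθ1 : θ < 1)
    (φ ψ : Space A → ℝ) (hφ : MemF θ φ) (hψ : MemF θ ψ)
    (hL1 : transfer φ (fun _ => 1) = fun _ => 1) (hψ0 : ∀ x, 0 ≤ ψ x)
    (μ : Measure (Space A)) (hμ : IsEqm φ μ) (ψt : ℝ) (hψt : ψt = ∫ x, ψ x ∂μ)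
    (b C₀ : ℝ)
    (hC₀ : C₀ = fNorm θ φ + 2 * max (supNorm ψ) 1)
    (lam : ℝ → ℝ) (ν : ℝ → Measure (Space A)) (hq : ℝ → Space A → ℝ)
    (hRPF : ∀ q : ℝ, IsRPF θ (fun x => φ x + q * ψ x) (lam q) (ν q) (hq q))
    (D ρ : ℝ) (hD1 : 1 ≤ D) (hρ : ρ ∈ Set.Ioo (0:ℝ) 1)
    (hgap : ∀ q : ℝ, |q| ≤ 1 / b → ∀ g : Space A → ℝ, MemF θ g → ∀ n : ℕ,
      fNorm θ (fun x => (transfer (fun y => φ y + q * ψ y))^[n] g x / lam q ^ n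
          - hq q x * ∫ y, g y ∂(ν q)) ≤ D * ρ ^ n * fNorm θ g)
    (hLψ : ∀ n : ℕ, supNorm (fun x => (transfer φ)^[n] ψ x - ψt) ≤ C₀ * D * ρ ^ n)
    (α : ℝ) (hα : 0 < α) (hαρ : max ρ θ = Real.exp (-α))
    (δ₀ : ℝ) (hδ₀ : 0 < δ₀) (hδψ : δ₀ < ψt)
    (n₀ : ℕ)
    (hn₀ : (n₀ : ℝ) - 1 ≤ (1 / α) * |Real.log (δ₀ / (16 * C₀ * D))| ∧
      (1 / α) * |Real.log (δ₀ / (16 * C₀ * D))| < n₀)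
    (q₀ : ℝ) (hq₀ : q₀ = min (δ₀ / (100 * C₀ ^ 2 * n₀)) (1 / b))
    :
    ∀ q ∈ Set.Icc (0 : ℝ) q₀,
      (∫ x, ψ x ∂((ν q).withDensity fun x => ENNReal.ofReal (hq q x))) < ψt + δ₀ / 2 := by
  rintro q ⟨hq0, hqq₀⟩
  have hS0 : 0 ≤ supNorm ψ := ENNReal.toReal_nonneg
  have hSC : 2 * supNorm ψ ≤ C₀ := by
    have hφ0 : 0 ≤ fNorm θ φ := add_nonneg ENNReal.toReal_nonneg ENNReal.toReal_nonneg
    linarith [le_max_left (supNorm ψ) 1]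
  have hψtS : ψt ≤ supNorm ψ := by
    have := hμ.1
    simpa [hψt] using integral_mono ((hψ.continuous hθ0 hθ1).integrable_of_compactSpace μ)
      (integrable_const _) fun x => (le_abs_self _).trans (abs_le_supNorm hψ.eSup_ne_top x)
  have hC₀0 : 0 < C₀ := by linarith
  have hD0 : 0 < D := by linarith
  have hρ0 : 0 ≤ ρ := hρ.1.le
  have hqb : |q| ≤ 1 / b := (abs_of_nonneg hq0).trans_le (hqq₀.trans (hq₀ ▸ min_le_right _ _))
  calc _ ≤ (exp (n₀ * (q * supNorm ψ)) + D * ρ ^ n₀)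
        * (exp (n₀ * (q * supNorm ψ)) * (ψt + C₀ * (D * ρ ^ n₀))) :=
        (hRPF q).integral_withDensity_le hθ0 hθ1 hφ hψ hL1 hq0 hψ0 (by positivity)
          (fun g hg => hgap q hqb g hg n₀) ((hLψ n₀).trans_eq (mul_assoc _ _ _))
    _ < ψt + δ₀ / 2 :=
        add_mul_mul_add_mul_lt (one_le_exp (by positivity))
          (hundred_mul_exp_sub_one_le hC₀0 hδ₀.le (by linarith) hq0
            (hqq₀.trans (hq₀ ▸ min_le_left _ _)) hS0 hSC) (by positivity)
          (sixteen_mul_mul_pow_le hC₀0 hD0 hδ₀ hρ0 (hαρ ▸ le_max_left ρ θ) hα hn₀.2)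
          hδ₀ hδψ (by linarith)

theorem statement14
    {s₀ M : ℕ} {A : Matrix (Fin s₀) (Fin s₀) ℕ} {θ : ℝ}
    (hs₀ : 2 ≤ s₀) (h01 : ∀ i j, A i j = 0 ∨ A i j = 1) (hM : 0 < M)
    (hap : ∀ i j, 0 < (A ^ M) i j) (hθ0 : 0 < θ) (hθ1 : θ < 1)
    (φ ψ : Space A → ℝ) (hφ : MemF θ φ) (hψ : MemF θ ψ)
    (hL1 : transfer φ (fun _ => 1) = fun _ => 1) (hψ0 : ∀ x, 0 ≤ ψ x)
    (hcoh : ¬ CohomToConst ψ)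
    (μ : Measure (Space A)) (hμ : IsEqm φ μ) (ψt : ℝ) (hψt : ψt = ∫ x, ψ x ∂μ)
    (b C₀ : ℝ) (hb : b = max 1 (holderNorm θ ψ))
    (hC₀ : C₀ = fNorm θ φ + 2 * max (supNorm ψ) 1)
    (lam : ℝ → ℝ) (ν : ℝ → Measure (Space A)) (hq : ℝ → Space A → ℝ)
    (hRPF : ∀ q : ℝ, IsRPF θ (fun x => φ x + q * ψ x) (lam q) (ν q) (hq q))
    (D ρ : ℝ) (hD1 : 1 ≤ D) (hρ : ρ ∈ Set.Ioo (0:ℝ) 1)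
    (hgap : ∀ q : ℝ, |q| ≤ 1 / b → ∀ g : Space A → ℝ, MemF θ g → ∀ n : ℕ,
      fNorm θ (fun x => (transfer (fun y => φ y + q * ψ y))^[n] g x / lam q ^ n
          - hq q x * ∫ y, g y ∂(ν q)) ≤ D * ρ ^ n * fNorm θ g)
    (hLψ : ∀ n : ℕ, supNorm (fun x => (transfer φ)^[n] ψ x - ψt) ≤ C₀ * D * ρ ^ n)
    (α : ℝ) (hα : 0 < α) (hαρ : max ρ θ = Real.exp (-α))
    (δ₀ : ℝ) (hδ₀ : 0 < δ₀) (hδψ : δ₀ < ψt)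
    (n₀ : ℕ)
    (hn₀ : (n₀ : ℝ) - 1 ≤ (1 / α) * |Real.log (δ₀ / (16 * C₀ * D))| ∧
      (1 / α) * |Real.log (δ₀ / (16 * C₀ * D))| < n₀)
    (q₀ : ℝ) (hq₀ : q₀ = min (δ₀ / (100 * C₀ ^ 2 * n₀)) (1 / b))
    :
    ∀ q ∈ Set.Icc (0 : ℝ) q₀,
      (∫ x, ψ x ∂((ν q).withDensity fun x => ENNReal.ofReal (hq q x))) < ψt + δ₀ / 2 :=
  statement14_general hθ0 hθ1 φ ψ hφ hψ hL1 hψ0 μ hμ ψt hψt b C₀ hC₀ lam ν hq hRPF D ρ hD1 hρ hgap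
    hLψ α hα hαρ δ₀ hδ₀ hδψ n₀ hn₀ q₀ hq₀

end SFT
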